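/- arXiv:math/0503064 — 6 statements merged into one kernel-verified Lean document; each statement's English description precedes it below -/
import Mathlib

section
/- Let (Δ_l)_{l≥0} be a sequence of nonnegative reals with Δ_0 = 0 and Δ_l ≤ 2R^l for all l, for some R ≥ 1. Suppose that for all l ≥ 1, Δ_l ≤ 2 Σ_{k=0}^{l-2} Δ_k R^{l-2-k} + C t Σ_{p=0}^{D-1} Δ_{l+p-1}, where C ≥ 0, t ≥ 0, D ≥ 2. If there exists γ ∈ (0, 1/R) with 2γ²(1-γR)^{-1} + C t Σ_{p=0}^{D-1} γ^{-p+1} < 1, then Δ_l = 0 for all l. -/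
/-! Weight the sequence by `γ ^ l` and let `M` be the supremum of `γ ^ l * Δ l`, which is finite
because `γ R < 1`. Multiplying the recursive inequality by `γ ^ l`, the convolution term is bounded
by `2 γ² (1 - γ R)⁻¹ M` through a geometric series and the shifted terms by `C t ∑ γ ^ (1 - p) M`,
so `M ≤ K M` for the constant `K < 1` of the hypothesis, forcing `M = 0`. -/

open Finset

theorem eq_zero_of_le_mul_iSup {ι : Type*} [Nonempty ι] {f : ι → ℝ} {K : ℝ}
    (hf : ∀ i, 0 ≤ f i) (hbdd : BddAbove (Set.range f)) (hK : K < 1)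
    (hle : ∀ i, f i ≤ K * ⨆ j, f j) (i : ι) : f i = 0 := by
  have hM : (⨆ j, f j) = 0 := by
    have hM_nonneg : 0 ≤ ⨆ j, f j := (hf i).trans (le_ciSup hbdd i)
    have hM_le : (⨆ j, f j) ≤ K * ⨆ j, f j := ciSup_le hle
    nlinarith
  exact le_antisymm (hM ▸ le_ciSup hbdd i) (hf i)

section Weighted

variable {Δ : ℕ → ℝ} {R γ M : ℝ}

theorem bddAbove_range_pow_mul (hγ : 0 ≤ γ) (hR : 0 ≤ R) (hγR : γ * R ≤ 1)
    (hbd : ∀ l, Δ l ≤ 2 * R ^ l) : BddAbove (Set.range fun l => γ ^ l * Δ l) := by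
  refine ⟨2, ?_⟩
  rintro _ ⟨l, rfl⟩
  calc γ ^ l * Δ l ≤ γ ^ l * (2 * R ^ l) := mul_le_mul_of_nonneg_left (hbd l) (by positivity)
    _ = 2 * (γ * R) ^ l := by ring
    _ ≤ 2 := mul_le_of_le_one_right zero_le_two (pow_le_one₀ (by positivity) hγR)

theorem pow_mul_sum_convolution_le (hγ : 0 ≤ γ) (hR : 0 ≤ R) (hγR : γ * R < 1)
    (hM : ∀ k, γ ^ k * Δ k ≤ M) (hM0 : 0 ≤ M) (l : ℕ) :
    γ ^ l * ∑ k ∈ range (l - 1), Δ k * R ^ (l - 2 - k) ≤ γ ^ 2 * (1 - γ * R)⁻¹ * M := by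
  have hterm : ∀ k ∈ range (l - 1),
      γ ^ l * (Δ k * R ^ (l - 2 - k)) ≤ M * γ ^ 2 * (γ * R) ^ (l - 1 - 1 - k) := by
    intro k hk
    have hl : l = k + 2 + (l - 1 - 1 - k) := by have := mem_range.mp hk; omega
    calc γ ^ l * (Δ k * R ^ (l - 2 - k))
        = γ ^ k * Δ k * (γ ^ 2 * (γ * R) ^ (l - 1 - 1 - k)) := by
          rw [mul_pow, show l - 2 - k = l - 1 - 1 - k by omega]
          nth_rewrite 1 [hl]
          ring
      _ ≤ M * (γ ^ 2 * (γ * R) ^ (l - 1 - 1 - k)) :=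
          mul_le_mul_of_nonneg_right (hM k) (by positivity)
      _ = M * γ ^ 2 * (γ * R) ^ (l - 1 - 1 - k) := by ring
  have hgeom : ∑ m ∈ range (l - 1), (γ * R) ^ m ≤ (1 - γ * R)⁻¹ := by
    have h := geom_sum_Ico_le_of_lt_one (m := 0) (n := l - 1) (by positivity : 0 ≤ γ * R) hγR
    rwa [← range_eq_Ico, pow_zero, one_div] at h
  calc γ ^ l * ∑ k ∈ range (l - 1), Δ k * R ^ (l - 2 - k)
      ≤ ∑ k ∈ range (l - 1), M * γ ^ 2 * (γ * R) ^ (l - 1 - 1 - k) := by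
        rw [mul_sum]; exact sum_le_sum hterm
    _ = M * γ ^ 2 * ∑ m ∈ range (l - 1), (γ * R) ^ m := by
        rw [← mul_sum, sum_range_reflect (fun m => (γ * R) ^ m)]
    _ ≤ M * γ ^ 2 * (1 - γ * R)⁻¹ := by gcongr
    _ = γ ^ 2 * (1 - γ * R)⁻¹ * M := by ring

theorem pow_mul_sum_shift_le (hγ : 0 < γ) (hM : ∀ k, γ ^ k * Δ k ≤ M) (D : ℕ) {l : ℕ}
    (hl : 1 ≤ l) :
    γ ^ l * ∑ p ∈ range D, Δ (l + p - 1) ≤ (∑ p ∈ range D, γ ^ (1 - (p : ℤ))) * M := by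
  rw [mul_sum, sum_mul]
  refine sum_le_sum fun p _ => ?_
  have hsplit : γ ^ l = γ ^ (1 - (p : ℤ)) * γ ^ (l + p - 1) := by
    rw [← zpow_natCast, ← zpow_natCast, ← zpow_add₀ hγ.ne', Nat.cast_sub (by omega)]
    push_cast
    ring_nf
  rw [hsplit, mul_assoc]
  exact mul_le_mul_of_nonneg_left (hM _) (zpow_pos hγ _).le

theorem pow_mul_le_mul_of_rec {C t : ℝ} {D l : ℕ} (hγ : 0 < γ) (hR : 0 < R) (hγR : γ * R < 1)
    (hC : 0 ≤ C) (ht : 0 ≤ t) (hM : ∀ k, γ ^ k * Δ k ≤ M) (hM0 : 0 ≤ M) (hl : 1 ≤ l)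
    (hrec : Δ l ≤ 2 * ∑ k ∈ range (l - 1), Δ k * R ^ (l - 2 - k)
      + C * t * ∑ p ∈ range D, Δ (l + p - 1)) :
    γ ^ l * Δ l ≤ (2 * γ ^ 2 * (1 - γ * R)⁻¹ + C * t * ∑ p ∈ range D, γ ^ (1 - (p : ℤ))) * M :=
  calc γ ^ l * Δ l
      ≤ γ ^ l * (2 * ∑ k ∈ range (l - 1), Δ k * R ^ (l - 2 - k)
          + C * t * ∑ p ∈ range D, Δ (l + p - 1)) :=
        mul_le_mul_of_nonneg_left hrec (by positivity)
    _ = 2 * (γ ^ l * ∑ k ∈ range (l - 1), Δ k * R ^ (l - 2 - k))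
          + C * t * (γ ^ l * ∑ p ∈ range D, Δ (l + p - 1)) := by ring
    _ ≤ 2 * (γ ^ 2 * (1 - γ * R)⁻¹ * M) + C * t * ((∑ p ∈ range D, γ ^ (1 - (p : ℤ))) * M) := by
        gcongr 2 * ?_ + C * t * ?_
        · exact pow_mul_sum_convolution_le hγ.le hR.le hγR hM hM0 l
        · exact pow_mul_sum_shift_le hγ hM D hl
    _ = _ := by ring

end Weighted

theorem schwinger_dyson_uniqueness_contraction_general
    (Δ : ℕ → ℝ) (R C t : ℝ) (D : ℕ)
    (hC : 0 ≤ C) (ht : 0 ≤ t)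
    (hnonneg : ∀ l, 0 ≤ Δ l) (h0 : Δ 0 = 0)
    (hbd : ∀ l, Δ l ≤ 2 * R ^ l)
    (hrec : ∀ l, 1 ≤ l →
      Δ l ≤ 2 * ∑ k ∈ Finset.range (l - 1), Δ k * R ^ (l - 2 - k)
              + C * t * ∑ p ∈ Finset.range D, Δ (l + p - 1))
    (γ : ℝ) (hγ0 : 0 < γ) (hγR : γ < 1 / R)
    (hcond : 2 * γ ^ 2 * (1 - γ * R)⁻¹
              + C * t * ∑ p ∈ Finset.range D, γ ^ (1 - (p : ℤ)) < 1) :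
    ∀ l, Δ l = 0 := by
  have hR : 0 < R := one_div_pos.mp (hγ0.trans hγR)
  have hγR' : γ * R < 1 := by rwa [lt_div_iff₀ hR] at hγR
  have hbdd := bddAbove_range_pow_mul hγ0.le hR.le hγR'.le hbd
  set M := ⨆ l, γ ^ l * Δ l
  have hM : ∀ k, γ ^ k * Δ k ≤ M := le_ciSup hbdd
  have hM0 : 0 ≤ M := by simpa [h0] using hM 0
  have hcontract : ∀ l, γ ^ l * Δ l ≤ (2 * γ ^ 2 * (1 - γ * R)⁻¹
      + C * t * ∑ p ∈ Finset.range D, γ ^ (1 - (p : ℤ))) * M := by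
    intro l
    rcases Nat.eq_zero_or_pos l with rfl | hl
    · have : 0 ≤ (1 - γ * R)⁻¹ := inv_nonneg.mpr (by linarith)
      rw [h0, mul_zero]
      positivity
    · exact pow_mul_le_mul_of_rec hγ0 hR hγR' hC ht hM hM0 hl (hrec l hl)
  intro l
  have hweighted := eq_zero_of_le_mul_iSup (fun l => mul_nonneg (pow_nonneg hγ0.le l) (hnonneg l))
    hbdd hcond hcontract l
  exact (mul_eq_zero.mp hweighted).resolve_left (pow_ne_zero l hγ0.ne')

/-- Contraction argument for uniqueness of solutions to the Schwinger-Dyson equation: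
if a nonnegative sequence `Δ` with `Δ 0 = 0`, `Δ l ≤ 2 R^l`, satisfies the recursive
inequality `Δ l ≤ 2 ∑_{k=0}^{l-2} Δ k R^{l-2-k} + C t ∑_{p=0}^{D-1} Δ (l+p-1)`, and
there is `γ ∈ (0, 1/R)` with `2γ²(1-γR)⁻¹ + C t ∑_{p=0}^{D-1} γ^{1-p} < 1`,
then `Δ` vanishes identically. -/
theorem schwinger_dyson_uniqueness_contraction
    (Δ : ℕ → ℝ) (R C t : ℝ) (D : ℕ)
    (hR : 1 ≤ R) (hC : 0 ≤ C) (ht : 0 ≤ t) (hD : 2 ≤ D)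
    (hnonneg : ∀ l, 0 ≤ Δ l) (h0 : Δ 0 = 0)
    (hbd : ∀ l, Δ l ≤ 2 * R ^ l)
    (hrec : ∀ l, 1 ≤ l →
      Δ l ≤ 2 * ∑ k ∈ Finset.range (l - 1), Δ k * R ^ (l - 2 - k)
              + C * t * ∑ p ∈ Finset.range D, Δ (l + p - 1))
    (γ : ℝ) (hγ0 : 0 < γ) (hγR : γ < 1 / R)
    (hcond : 2 * γ ^ 2 * (1 - γ * R)⁻¹
              + C * t * ∑ p ∈ Finset.range D, γ ^ (1 - (p : ℤ)) < 1) :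
    ∀ l, Δ l = 0 :=
  schwinger_dyson_uniqueness_contraction_general Δ R C t D hC ht hnonneg h0 hbd hrec γ hγ0 hγR hcond
end

section
/- Define a family of real numbers τ^{k̄}(P) indexed by multi-indices k̄ ∈ ℕ^n and words P in m letters by the recursion: τ^{k̄}(1) = 1 if k̄ = 0 and 0 otherwise, and τ^{k̄}(X_i P) = Σ_{0 ≤ p̄ ≤ k̄} Π_j binom(k_j, p_j) Σ_{P = P₁ X_i P₂} τ^{p̄}(P₁) τ^{k̄-p̄}(P₂) + Σ_{j: k_j ≥ 1} k_j τ^{k̄ - 1_j}((𝒟_i q_j + 𝒟_i q_j^*) P), where q_1,...,q_n are fixed monomials of degree at most D and 𝒟_i is the cyclic derivative. Then there exist constants A, B (depending only on n and D, e.g. B = 2^{n+1}, A = 4nB^{D-2}4^{D-2}) such that for all k̄ and all words P, |τ^{k̄}(P)| / k̄! ≤ A^{Σ k_i} B^{deg P} (Π_i C_{k_i}) C_{deg P}, where C_j are the Catalan numbers and k̄! = Π k_i!. -/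
/-!
By lexicographic induction on `(|k̄|, deg P)` one proves
`|τ^{k̄}(P)| ≤ k̄! A^{|k̄|} B^{deg P} (∏ C_{k_j}) C_{deg P}`.
In the recursion for `τ^{k̄}(X_i P)` the binomials of the splitting sum are exactly cancelled by
the factorials, and what remains are Catalan convolutions: `∑ C_p C_{k-p} = C_{k+1} ≤ 4 C_k` in each
of the `n` indices and once in the degree, a loss of `4^n` paid for by one factor `B ≥ 2·4^n`.
The cyclic-derivative sum lowers `|k̄|` by one but raises the degree by at most `D`, a loss of
`(4B)^D` (since `C_{a+b} ≤ 4^a C_b`) paid for by one factor `A`. With these choices each of the two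
sums is at most half of the bound.
-/

open Finset

/-- The positions at which the letter `i` occurs in the word `P`,
corresponding to the decompositions `P = P₁ X_i P₂`. -/
def occurrences {m : ℕ} (i : Fin m) (P : List (Fin m)) : Finset (Fin P.length) :=
  Finset.univ.filter (fun k => P.get k = i)

/-- The multi-index with a single `1` in position `j`. -/
def unitIdx {n : ℕ} (j : Fin n) : Fin n → ℕ := fun j' => if j' = j then 1 else 0

/-- For a word `q` and a position `k` (an occurrence of the letter `i`, so
`q = q₁ X_i q₂` with `q₁ = q.take k`, `q₂ = q.drop (k+1)`), the corresponding
term `q₂ q₁ P` of the cyclic derivative `𝒟_i q` multiplied by `P`. -/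
def cycTerm {m : ℕ} (q : List (Fin m)) (k : ℕ) (P : List (Fin m)) : List (Fin m) :=
  q.drop (k + 1) ++ q.take k ++ P

open scoped Nat

theorem succ_succ_mul_catalan_succ (k : ℕ) :
    (k + 2) * catalan (k + 1) = (4 * k + 2) * catalan k := by
  apply Nat.eq_of_mul_eq_mul_left k.succ_pos
  calc (k + 1) * ((k + 2) * catalan (k + 1)) = (k + 1) * ((k + 1 + 1) * catalan (k + 1)) := by
        ring
    _ = (k + 1) * (k + 1).centralBinom := by rw [succ_mul_catalan_eq_centralBinom]
    _ = 2 * (2 * k + 1) * k.centralBinom := Nat.succ_mul_centralBinom_succ k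
    _ = (k + 1) * ((4 * k + 2) * catalan k) := by rw [← succ_mul_catalan_eq_centralBinom]; ring

theorem catalan_le_catalan_succ (k : ℕ) : catalan k ≤ catalan (k + 1) :=
  Nat.le_of_mul_le_mul_left (by rw [succ_succ_mul_catalan_succ]; gcongr; omega)
    (by omega : 0 < k + 2)

theorem catalan_mono : Monotone catalan := monotone_nat_of_le_succ catalan_le_catalan_succ

theorem one_le_catalan (k : ℕ) : 1 ≤ catalan k := catalan_zero ▸ catalan_mono k.zero_le

theorem catalan_succ_le_four_mul (k : ℕ) : catalan (k + 1) ≤ 4 * catalan k :=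
  Nat.le_of_mul_le_mul_left (by rw [succ_succ_mul_catalan_succ]; nlinarith)
    (by omega : 0 < k + 2)

theorem catalan_add_le (a b : ℕ) : catalan (a + b) ≤ 4 ^ a * catalan b := by
  induction a with
  | zero => simp
  | succ a ih =>
    calc catalan (a + 1 + b) = catalan (a + b + 1) := by rw [Nat.add_right_comm]
      _ ≤ 4 * catalan (a + b) := catalan_succ_le_four_mul _
      _ ≤ 4 ^ (a + 1) * catalan b := by rw [pow_succ', mul_assoc]; exact Nat.mul_le_mul_left 4 ih

theorem sum_catalan_mul_catalan_le {L : ℕ} (s : Finset (Fin L)) :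
    ∑ k ∈ s, catalan k * catalan (L - (k + 1)) ≤ catalan L := by
  cases L with
  | zero => simp [Finset.eq_empty_of_isEmpty s]
  | succ L =>
    calc ∑ k ∈ s, catalan k * catalan (L + 1 - (k + 1))
        ≤ ∑ k : Fin (L + 1), catalan k * catalan (L - k) := by
          simp only [Nat.add_sub_add_right]
          exact Finset.sum_le_sum_of_subset (Finset.subset_univ s)
      _ = catalan (L + 1) := (catalan_succ L).symm

theorem sum_Iic_prod_catalan_le {n : ℕ} (kk : Fin n → ℕ) :
    ∑ pp ∈ Iic kk, ∏ j, catalan (pp j) * catalan (kk j - pp j) ≤ 4 ^ n * ∏ j, catalan (kk j) := by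
  rw [show Iic kk = Fintype.piFinset fun j => Iic (kk j) from rfl,
    ← Finset.prod_univ_sum (fun j => Iic (kk j)) fun j p => catalan p * catalan (kk j - p)]
  calc ∏ j, ∑ p ∈ Iic (kk j), catalan p * catalan (kk j - p) = ∏ j, catalan (kk j + 1) :=
        Finset.prod_congr rfl fun j _ => by
          rw [catalan_succ, ← Nat.range_succ_eq_Iic, Finset.sum_range]
    _ ≤ ∏ j, 4 * catalan (kk j) := Finset.prod_le_prod' fun j _ => catalan_succ_le_four_mul _
    _ = 4 ^ n * ∏ j, catalan (kk j) := by simp [Finset.prod_mul_distrib]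

section MultiIndex

variable {n : ℕ}

theorem prod_choose_mul_prod_factorial {pp kk : Fin n → ℕ} (h : pp ≤ kk) :
    (∏ j, (kk j).choose (pp j)) * ((∏ j, (pp j)!) * ∏ j, ((kk - pp) j)!) = ∏ j, (kk j)! := by
  simp only [← Finset.prod_mul_distrib, Pi.sub_apply]
  exact Finset.prod_congr rfl fun j _ => by
    rw [← mul_assoc, Nat.choose_mul_factorial_mul_factorial (h j)]

theorem sum_add_sum_sub {pp kk : Fin n → ℕ} (h : pp ≤ kk) :
    ∑ j, pp j + ∑ j, (kk - pp) j = ∑ j, kk j := by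
  rw [← Finset.sum_add_distrib]
  exact Finset.sum_congr rfl fun j _ => Nat.add_sub_of_le (h j)

theorem sum_sub_unitIdx_add_one {kk : Fin n → ℕ} {j : Fin n} (h : 1 ≤ kk j) :
    ∑ x, (kk - unitIdx j) x + 1 = ∑ x, kk x := by
  have hle : unitIdx j ≤ kk := fun x => by
    by_cases hx : x = j
    · simpa [unitIdx, hx] using h
    · simp [unitIdx, hx]
  have hsum : ∑ x, unitIdx j x = 1 := by simp [unitIdx]
  rw [← hsum, add_comm, sum_add_sum_sub hle]

theorem mul_prod_factorial_sub_unitIdx {kk : Fin n → ℕ} {j : Fin n} (h : 1 ≤ kk j) :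
    kk j * ∏ x, ((kk - unitIdx j) x)! = ∏ x, (kk x)! := by
  rw [← Finset.mul_prod_erase _ _ (Finset.mem_univ j),
    ← Finset.mul_prod_erase _ (fun x => (kk x)!) (Finset.mem_univ j), ← mul_assoc]
  congr 1
  · simp only [Pi.sub_apply, unitIdx]
    exact Nat.mul_factorial_pred (by omega)
  · exact Finset.prod_congr rfl fun x hx => by
      simp [unitIdx, Finset.ne_of_mem_erase hx]

end MultiIndex

def catalanBound {n : ℕ} (A B : ℝ) (kk : Fin n → ℕ) (L : ℕ) : ℝ :=
  (∏ j, ((kk j)! : ℝ)) * A ^ (∑ j, kk j) * B ^ L * (∏ j, (catalan (kk j) : ℝ)) * catalan L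

section CatalanBound

variable {n : ℕ} {A B : ℝ}

theorem catalanBound_nonneg (hA : 0 ≤ A) (hB : 0 ≤ B) (kk : Fin n → ℕ) (L : ℕ) :
    0 ≤ catalanBound A B kk L := by
  unfold catalanBound; positivity

theorem one_le_catalanBound (hA : 1 ≤ A) (hB : 1 ≤ B) (kk : Fin n → ℕ) (L : ℕ) :
    1 ≤ catalanBound A B kk L := by
  have hcat : ∀ k, (1 : ℝ) ≤ catalan k := fun k => by exact_mod_cast one_le_catalan k
  unfold catalanBound
  refine one_le_mul_of_one_le_of_one_le (one_le_mul_of_one_le_of_one_le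
    (one_le_mul_of_one_le_of_one_le (one_le_mul_of_one_le_of_one_le ?_ (one_le_pow₀ hA))
      (one_le_pow₀ hB)) ?_) (hcat L)
  · exact Finset.one_le_prod fun j _ => by exact_mod_cast (kk j).factorial_pos
  · exact Finset.one_le_prod fun j _ => hcat _

theorem catalanBound_mono (hA : 0 ≤ A) (hB : 1 ≤ B) (kk : Fin n → ℕ) :
    Monotone (catalanBound A B kk) := fun L L' h => by
  unfold catalanBound
  have hcat : (catalan L : ℝ) ≤ catalan L' := by exact_mod_cast catalan_mono h
  gcongr

theorem catalanBound_add_le (hA : 0 ≤ A) (hB : 0 ≤ B) (kk : Fin n → ℕ) (a b : ℕ) :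
    catalanBound A B kk (a + b) ≤ (4 * B) ^ a * catalanBound A B kk b := by
  have hcat : (catalan (a + b) : ℝ) ≤ 4 ^ a * catalan b := by exact_mod_cast catalan_add_le a b
  unfold catalanBound
  calc _ ≤ (∏ j, ((kk j)! : ℝ)) * A ^ (∑ j, kk j) * B ^ (a + b) * (∏ j, (catalan (kk j) : ℝ)) *
        (4 ^ a * catalan b) := by gcongr
    _ = _ := by ring

theorem mul_catalanBound_sub_unitIdx_le (hA : 0 ≤ A) (hB : 0 ≤ B) {kk : Fin n → ℕ} {j : Fin n}
    (h : 1 ≤ kk j) (L : ℕ) :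
    A * (kk j * catalanBound A B (kk - unitIdx j) L) ≤ catalanBound A B kk L := by
  have hfact : (kk j : ℝ) * ∏ x, (((kk - unitIdx j) x)! : ℝ) = ∏ x, ((kk x)! : ℝ) := by
    exact_mod_cast mul_prod_factorial_sub_unitIdx h
  have hpow : A * A ^ (∑ x, (kk - unitIdx j) x) = A ^ (∑ x, kk x) := by
    rw [← sum_sub_unitIdx_add_one h, pow_succ']
  have hcat : ∏ x, (catalan ((kk - unitIdx j) x) : ℝ) ≤ ∏ x, (catalan (kk x) : ℝ) :=
    Finset.prod_le_prod (fun _ _ => by positivity) fun x _ => by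
      exact_mod_cast catalan_mono (tsub_le_self : (kk - unitIdx j) x ≤ kk x)
  unfold catalanBound
  calc _ = ((kk j : ℝ) * ∏ x, (((kk - unitIdx j) x)! : ℝ)) * (A * A ^ (∑ x, (kk - unitIdx j) x)) *
        B ^ L * (∏ x, (catalan ((kk - unitIdx j) x) : ℝ)) * catalan L := by ring
    _ ≤ _ := by rw [hfact, hpow]; gcongr

theorem prod_choose_mul_catalanBound_mul {pp kk : Fin n → ℕ} (h : pp ≤ kk) (a b : ℕ) :
    (∏ j, ((kk j).choose (pp j) : ℝ)) * (catalanBound A B pp a * catalanBound A B (kk - pp) b) =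
      (∏ j, ((kk j)! : ℝ)) * A ^ (∑ j, kk j) * B ^ (a + b) *
        (∏ j, (catalan (pp j) * catalan (kk j - pp j) : ℝ)) * (catalan a * catalan b) := by
  have hfact : (∏ j, ((kk j).choose (pp j) : ℝ)) *
      ((∏ j, ((pp j)! : ℝ)) * ∏ j, (((kk - pp) j)! : ℝ)) = ∏ j, ((kk j)! : ℝ) := by
    exact_mod_cast prod_choose_mul_prod_factorial h
  unfold catalanBound
  rw [← hfact, ← sum_add_sum_sub h, pow_add, pow_add, Finset.prod_mul_distrib]
  simp only [Pi.sub_apply]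
  ring

end CatalanBound

def splitTerm {m n : ℕ} (τ : (Fin n → ℕ) → List (Fin m) → ℝ) (kk : Fin n → ℕ) (i : Fin m)
    (P : List (Fin m)) : ℝ :=
  ∑ pp ∈ Iic kk, (∏ j, ((kk j).choose (pp j) : ℝ)) *
    ∑ k ∈ occurrences i P, τ pp (P.take (k : ℕ)) * τ (kk - pp) (P.drop ((k : ℕ) + 1))

theorem one_le_two_mul_four_pow (n : ℕ) : (1 : ℝ) ≤ 2 * 4 ^ n :=
  one_le_mul_of_one_le_of_one_le one_le_two (one_le_pow₀ (by norm_num))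

theorem two_mul_four_pow_mul_pow_le {n L : ℕ} {B : ℝ} (hB : 2 * 4 ^ n ≤ B) :
    2 * (4 ^ n * B ^ (L - 1)) ≤ B ^ (L + 1) := by
  have hB1 : 1 ≤ B := (one_le_two_mul_four_pow n).trans hB
  calc 2 * (4 ^ n * B ^ (L - 1)) = (2 * 4 ^ n) * B ^ (L - 1) := by ring
    _ ≤ B * B ^ L :=
      mul_le_mul hB (pow_le_pow_right₀ hB1 (Nat.sub_le L 1)) (by positivity) (by positivity)
    _ = B ^ (L + 1) := (pow_succ' B L).symm

theorem convolution_le_half_catalanBound {n L : ℕ} {A B : ℝ} (hA : 0 ≤ A) (hB : 2 * 4 ^ n ≤ B)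
    (kk : Fin n → ℕ) (s : Finset (Fin L)) :
    (∏ j, ((kk j)! : ℝ)) * A ^ (∑ j, kk j) * B ^ (L - 1) *
        (∑ pp ∈ Iic kk, ∏ j, (catalan (pp j) * catalan (kk j - pp j) : ℝ)) *
        ∑ k ∈ s, (catalan k * catalan (L - (k + 1)) : ℝ) ≤
      catalanBound A B kk (L + 1) / 2 := by
  have hpp : ∑ pp ∈ Iic kk, ∏ j, (catalan (pp j) * catalan (kk j - pp j) : ℝ) ≤
      4 ^ n * ∏ j, (catalan (kk j) : ℝ) := by
    exact_mod_cast sum_Iic_prod_catalan_le kk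
  have hk : ∑ k ∈ s, (catalan k * catalan (L - (k + 1)) : ℝ) ≤ catalan (L + 1) := by
    exact_mod_cast (sum_catalan_mul_catalan_le s).trans (catalan_le_catalan_succ L)
  have hB' := two_mul_four_pow_mul_pow_le (L := L) hB
  have hB0 : 0 ≤ B := le_trans (by positivity) hB
  unfold catalanBound
  rw [le_div_iff₀ two_pos]
  calc _ ≤ (∏ j, ((kk j)! : ℝ)) * A ^ (∑ j, kk j) * B ^ (L - 1) *
        (4 ^ n * ∏ j, (catalan (kk j) : ℝ)) * catalan (L + 1) * 2 := by gcongr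
    _ = (∏ j, ((kk j)! : ℝ)) * A ^ (∑ j, kk j) * (2 * (4 ^ n * B ^ (L - 1))) *
        (∏ j, (catalan (kk j) : ℝ)) * catalan (L + 1) := by ring
    _ ≤ _ := by gcongr

theorem abs_splitTerm_le {m n : ℕ} {A B : ℝ} (hA : 0 ≤ A) (hB : 2 * 4 ^ n ≤ B)
    (τ : (Fin n → ℕ) → List (Fin m) → ℝ) (kk : Fin n → ℕ) (i : Fin m) (P : List (Fin m))
    (ih : ∀ pp ≤ kk, ∀ W : List (Fin m), W.length < P.length →
      |τ pp W| ≤ catalanBound A B pp W.length) :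
    |splitTerm τ kk i P| ≤ catalanBound A B kk (P.length + 1) / 2 := by
  set L := P.length
  have hB0 : 0 ≤ B := le_trans (by positivity) hB
  have hterm : ∀ pp ∈ Iic kk, ∀ k : Fin L,
      |τ pp (P.take k) * τ (kk - pp) (P.drop (k + 1))| ≤
        catalanBound A B pp k * catalanBound A B (kk - pp) (L - (k + 1)) := fun pp hpp k => by
    have hpp : pp ≤ kk := Finset.mem_Iic.mp hpp
    rw [abs_mul]
    refine mul_le_mul ?_ ?_ (abs_nonneg _) (catalanBound_nonneg hA hB0 _ _)
    · simpa [L, k.isLt.le] using ih pp hpp (P.take k) (by simp [L, k.isLt])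
    · have hlen : (P.drop (k + 1)).length < L := by
        have := k.isLt; simp only [List.length_drop]; omega
      simpa [L] using ih (kk - pp) tsub_le_self (P.drop (k + 1)) hlen
  have hsplit : ∀ k : Fin L, (k : ℕ) + (L - (k + 1)) = L - 1 := fun k => by omega
  calc |splitTerm τ kk i P|
      ≤ ∑ pp ∈ Iic kk, ∑ k ∈ occurrences i P, (∏ j, ((kk j).choose (pp j) : ℝ)) *
          (catalanBound A B pp k * catalanBound A B (kk - pp) (L - (k + 1))) := by
        refine (abs_sum_le_sum_abs _ _).trans (Finset.sum_le_sum fun pp hpp => ?_)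
        rw [abs_mul, abs_of_nonneg (by positivity), ← Finset.mul_sum]
        refine mul_le_mul_of_nonneg_left ((abs_sum_le_sum_abs _ _).trans ?_) (by positivity)
        exact Finset.sum_le_sum fun k _ => hterm pp hpp k
    _ = (∏ j, ((kk j)! : ℝ)) * A ^ (∑ j, kk j) * B ^ (L - 1) *
          (∑ pp ∈ Iic kk, ∏ j, (catalan (pp j) * catalan (kk j - pp j) : ℝ)) *
          ∑ k ∈ occurrences i P, (catalan k * catalan (L - (k + 1)) : ℝ) := by
        rw [mul_assoc, Finset.sum_mul_sum]
        simp_rw [Finset.mul_sum]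
        refine Finset.sum_congr rfl fun pp hpp => Finset.sum_congr rfl fun k _ => ?_
        rw [prod_choose_mul_catalanBound_mul (Finset.mem_Iic.mp hpp), hsplit]
        ring
    _ ≤ catalanBound A B kk (L + 1) / 2 := convolution_le_half_catalanBound hA hB kk _

/-- `f((𝒟_i r) P)` for the linear extension of `f` to polynomials. -/
def cyclicDerivEval {m : ℕ} (r : List (Fin m)) (f : List (Fin m) → ℝ) (i : Fin m)
    (P : List (Fin m)) : ℝ :=
  ∑ k ∈ occurrences i r, f (cycTerm r k P)

/-- `(q j).reverse` is the adjoint monomial `q_j^*`. -/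
def cyclicTerm {m n : ℕ} (q : Fin n → List (Fin m)) (τ : (Fin n → ℕ) → List (Fin m) → ℝ)
    (kk : Fin n → ℕ) (i : Fin m) (P : List (Fin m)) : ℝ :=
  ∑ j, (kk j : ℝ) * (cyclicDerivEval (q j) (τ (kk - unitIdx j)) i P +
    cyclicDerivEval (q j).reverse (τ (kk - unitIdx j)) i P)

theorem length_cycTerm_le {m : ℕ} (r : List (Fin m)) (k : ℕ) (P : List (Fin m)) :
    (cycTerm r k P).length ≤ r.length + P.length := by
  simp only [cycTerm, List.length_append, List.length_drop, List.length_take]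
  omega

theorem abs_cyclicDerivEval_le {m D : ℕ} {r : List (Fin m)} (hr : r.length ≤ D)
    {f : List (Fin m) → ℝ} {i : Fin m} {P : List (Fin m)} {M : ℝ}
    (hf : ∀ W : List (Fin m), W.length ≤ D + P.length → |f W| ≤ M) :
    |cyclicDerivEval r f i P| ≤ D * M := by
  have hM : 0 ≤ M := (abs_nonneg _).trans (hf [] (Nat.zero_le _))
  have hcard : ((occurrences i r).card : ℝ) ≤ D := by
    exact_mod_cast ((card_le_univ _).trans_eq (Fintype.card_fin _)).trans hr
  calc |cyclicDerivEval r f i P| ≤ ∑ k ∈ occurrences i r, |f (cycTerm r k P)| :=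
        abs_sum_le_sum_abs _ _
    _ ≤ (occurrences i r).card * M := by
        rw [← nsmul_eq_mul]
        exact Finset.sum_le_card_nsmul _ _ _ fun k _ =>
          hf _ ((length_cycTerm_le r k P).trans (by omega))
    _ ≤ D * M := by gcongr

theorem mul_abs_cyclicSummand_le {m n D : ℕ} {r : List (Fin m)} (hr : r.length ≤ D)
    {A B : ℝ} (hA : 0 ≤ A) (hB : 1 ≤ B) (f : List (Fin m) → ℝ) (kk : Fin n → ℕ) (j : Fin n)
    (i : Fin m) (P : List (Fin m))
    (ih : 1 ≤ kk j → ∀ W : List (Fin m), |f W| ≤ catalanBound A B (kk - unitIdx j) W.length) :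
    A * |(kk j : ℝ) * (cyclicDerivEval r f i P + cyclicDerivEval r.reverse f i P)| ≤
      2 * D * (4 * B) ^ D * catalanBound A B kk (P.length + 1) := by
  have hB0 : 0 ≤ B := zero_le_one.trans hB
  rcases Nat.eq_zero_or_pos (kk j) with hzero | hpos
  · simp only [hzero, Nat.cast_zero, zero_mul, abs_zero, mul_zero]
    have := catalanBound_nonneg hA hB0 kk (P.length + 1)
    positivity
  set Φ' := catalanBound A B (kk - unitIdx j) (P.length + 1)
  have hW : ∀ W : List (Fin m), W.length ≤ D + P.length → |f W| ≤ (4 * B) ^ D * Φ' :=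
    fun W hW => (ih hpos W).trans <|
      (catalanBound_mono hA hB _ (by omega : W.length ≤ D + (P.length + 1))).trans
        (catalanBound_add_le hA hB0 _ _ _)
  have h₁ := abs_cyclicDerivEval_le hr (i := i) hW
  have h₂ := abs_cyclicDerivEval_le (List.length_reverse.trans_le hr) (i := i) hW
  rw [abs_mul, Nat.abs_cast]
  calc A * (kk j * |cyclicDerivEval r f i P + cyclicDerivEval r.reverse f i P|)
      ≤ A * (kk j * (2 * (D * ((4 * B) ^ D * Φ')))) := by
        gcongr
        linarith [abs_add_le (cyclicDerivEval r f i P) (cyclicDerivEval r.reverse f i P)]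
    _ = 2 * D * (4 * B) ^ D * (A * (kk j * Φ')) := by ring
    _ ≤ 2 * D * (4 * B) ^ D * catalanBound A B kk (P.length + 1) := by
        gcongr
        exact mul_catalanBound_sub_unitIdx_le hA hB0 hpos _

theorem abs_cyclicTerm_le {m n D : ℕ} {q : Fin n → List (Fin m)} (hq : ∀ j, (q j).length ≤ D)
    {A B : ℝ} (hA : 1 ≤ A) (hAD : 4 * n * D * (4 * B) ^ D ≤ A) (hB : 1 ≤ B)
    (τ : (Fin n → ℕ) → List (Fin m) → ℝ) (kk : Fin n → ℕ) (i : Fin m) (P : List (Fin m))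
    (ih : ∀ j, 1 ≤ kk j → ∀ W : List (Fin m),
      |τ (kk - unitIdx j) W| ≤ catalanBound A B (kk - unitIdx j) W.length) :
    |cyclicTerm q τ kk i P| ≤ catalanBound A B kk (P.length + 1) / 2 := by
  set Φ := catalanBound A B kk (P.length + 1)
  have hΦ : 0 ≤ Φ := catalanBound_nonneg (zero_le_one.trans hA) (zero_le_one.trans hB) _ _
  have hsum : A * |cyclicTerm q τ kk i P| ≤ n * (2 * D * (4 * B) ^ D * Φ) := by
    calc _ ≤ ∑ j, A * |(kk j : ℝ) * (cyclicDerivEval (q j) (τ (kk - unitIdx j)) i P +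
          cyclicDerivEval (q j).reverse (τ (kk - unitIdx j)) i P)| := by
          rw [← Finset.mul_sum]; gcongr; exact abs_sum_le_sum_abs _ _
      _ ≤ ∑ _j : Fin n, 2 * D * (4 * B) ^ D * Φ := Finset.sum_le_sum fun j _ =>
          mul_abs_cyclicSummand_le (hq j) (zero_le_one.trans hA) hB _ kk j i P (ih j)
      _ = n * (2 * D * (4 * B) ^ D * Φ) := by simp
  have hcst : n * (2 * D * (4 * B) ^ D * Φ) ≤ A * (Φ / 2) := by
    calc _ = (4 * n * D * (4 * B) ^ D) * (Φ / 2) := by ring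
      _ ≤ A * (Φ / 2) := by gcongr
  exact le_of_mul_le_mul_left (hsum.trans hcst) (by linarith)

theorem abs_le_catalanBound {m n D : ℕ} {q : Fin n → List (Fin m)} (hq : ∀ j, (q j).length ≤ D)
    {τ : (Fin n → ℕ) → List (Fin m) → ℝ} (hbase : ∀ kk, τ kk [] = if kk = 0 then 1 else 0)
    (hrec : ∀ kk i P, τ kk (i :: P) = splitTerm τ kk i P + cyclicTerm q τ kk i P)
    {A B : ℝ} (hA : 1 ≤ A) (hAD : 4 * n * D * (4 * B) ^ D ≤ A) (hB : 2 * 4 ^ n ≤ B) :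
    ∀ kk P, |τ kk P| ≤ catalanBound A B kk P.length
  | kk, [] => by
    have hB1 : 1 ≤ B := (one_le_two_mul_four_pow n).trans hB
    rw [hbase]
    split_ifs
    · simpa using one_le_catalanBound hA hB1 kk 0
    · simpa using catalanBound_nonneg (zero_le_one.trans hA) (zero_le_one.trans hB1) kk 0
  | kk, i :: P => by
    have hsplit := abs_splitTerm_le (zero_le_one.trans hA) hB τ kk i P fun pp hpp W hW =>
      abs_le_catalanBound hq hbase hrec hA hAD hB pp W
    have hcyc := abs_cyclicTerm_le hq hA hAD ((one_le_two_mul_four_pow n).trans hB) τ kk i P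
      fun j hj W => abs_le_catalanBound hq hbase hrec hA hAD hB (kk - unitIdx j) W
    rw [hrec, List.length_cons]
    linarith [abs_add_le (splitTerm τ kk i P) (cyclicTerm q τ kk i P)]
termination_by kk P => (∑ j, kk j, P.length)
decreasing_by
  · exact Prod.lex_def.2 <| (Finset.sum_le_sum (s := univ) fun x _ => hpp x).lt_or_eq.imp_right
      fun h => ⟨h, Nat.lt_succ_of_lt hW⟩
  · have := sum_sub_unitIdx_add_one hj
    exact Prod.Lex.left _ _ (by simp only [Pi.sub_apply] at this ⊢; omega)

/-- Catalan-type a priori bound on the solution of the Schwinger-Dyson recursion: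
if `τ` satisfies `τ^{kk}(1) = 1_{kk=0}` and the recursion
`τ^{kk}(X_i P) = ∑_{pp ≤ kk} ∏ binom(k_j,p_j) ∑_{P=P₁X_iP₂} τ^{pp}(P₁)τ^{kk-pp}(P₂)
  + ∑_{j : k_j ≥ 1} k_j τ^{kk-1_j}((𝒟_i q_j + 𝒟_i q_j^*)P)`
for fixed monomials `q_1,…,q_n` of degree at most `D`, then there are constants
`A, B ≥ 1` (depending only on `n` and `D`) with
`|τ^{kk}(P)|/kk! ≤ A^{Σ k_i} B^{deg P} (∏ C_{k_i}) C_{deg P}`. -/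
theorem schwinger_dyson_recursion_catalan_bound
    (m n D : ℕ) (q : Fin n → List (Fin m)) (hq : ∀ j, (q j).length ≤ D)
    (τ : (Fin n → ℕ) → List (Fin m) → ℝ)
    (hbase : ∀ kk : Fin n → ℕ, τ kk [] = if kk = 0 then 1 else 0)
    (hrec : ∀ (kk : Fin n → ℕ) (i : Fin m) (P : List (Fin m)),
      τ kk (i :: P) =
        (∑ pp ∈ Finset.Iic kk,
          (∏ j, ((kk j).choose (pp j) : ℝ)) *
            ∑ k ∈ occurrences i P,
              τ pp (P.take (k : ℕ)) * τ (kk - pp) (P.drop ((k : ℕ) + 1)))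
        + ∑ j : Fin n,
            (kk j : ℝ) *
              ((∑ k ∈ occurrences i (q j), τ (kk - unitIdx j) (cycTerm (q j) (k : ℕ) P))
               + ∑ k ∈ occurrences i (q j).reverse,
                   τ (kk - unitIdx j) (cycTerm (q j).reverse (k : ℕ) P))) :
    ∃ A B : ℝ, 1 ≤ A ∧ 1 ≤ B ∧
      ∀ (kk : Fin n → ℕ) (P : List (Fin m)),
        |τ kk P| / ∏ i, ((kk i).factorial : ℝ) ≤
          A ^ (∑ i, kk i) * B ^ P.length *
            (∏ i, (catalan (kk i) : ℝ)) * (catalan P.length : ℝ) := by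
  set B : ℝ := 2 * 4 ^ n
  set A : ℝ := max 1 (4 * n * D * (4 * B) ^ D)
  refine ⟨A, B, le_max_left _ _, one_le_two_mul_four_pow n, fun kk P => ?_⟩
  have hbound := abs_le_catalanBound hq hbase hrec (le_max_left _ _) (le_max_right _ _) le_rfl kk P
  rw [div_le_iff₀ (by positivity)]
  unfold catalanBound at hbound
  linarith
end

section
/- Under the bound |τ^{k̄}(P)|/k̄! ≤ A^{Σk_i} B^{deg P} (Π C_{k_i}) C_{deg P}, the multi-series τ_t(P) = Σ_{k̄ ∈ ℕ^n} Π_i ((-t_i)^{k_i}/k_i!) τ^{k̄}(P) converges absolutely for |t_i| < 1/(4A), and satisfies |τ_t(P)| ≤ Π_{i=1}^n (1 - 4A|t_i|)^{-1} (4B)^{deg P}. -/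
/-! Since `C_k ≤ 4^k`, the hypothesis bounds the `kk`-th term of the series in absolute value by
`∏ (4A|t_i|)^{k_i} · (4B)^{deg P}`, and this majorant is a product of `n` convergent geometric
series with sum `∏ (1 - 4A|t_i|)⁻¹ · (4B)^{deg P}`. -/

open Finset

theorem catalan_le_four_pow (k : ℕ) : catalan k ≤ 4 ^ k :=
  calc catalan k ≤ (k + 1) * catalan k := Nat.le_mul_of_pos_left _ k.succ_pos
    _ = k.centralBinom := succ_mul_catalan_eq_centralBinom k
    _ ≤ 4 ^ k := Nat.centralBinom_le_four_pow k

theorem hasSum_pi_prod_of_nonneg {κ : Type*} {n : ℕ} {f : Fin n → κ → ℝ} {S : Fin n → ℝ}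
    (hf : ∀ i k, 0 ≤ f i k) (hS : ∀ i, HasSum (f i) (S i)) :
    HasSum (fun k : Fin n → κ => ∏ i, f i (k i)) (∏ i, S i) := by
  induction n with
  | zero => simp
  | succ n ih =>
    set g : (Fin n → κ) → ℝ := fun k => ∏ i : Fin n, f i.succ (k i)
    have htail : HasSum g (∏ i : Fin n, S i.succ) :=
      ih (fun i k => hf i.succ k) (fun i => hS i.succ)
    have hsplit : HasSum (fun p : κ × (Fin n → κ) => f 0 p.1 * g p.2)
        (S 0 * ∏ i : Fin n, S i.succ) :=
      (hS 0).mul htail <| (hS 0).summable.mul_of_nonneg htail.summable (hf 0)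
        fun _ => prod_nonneg fun i _ => hf i.succ _
    rw [Fin.prod_univ_succ]
    convert ((Fin.consEquiv fun _ : Fin (n + 1) => κ).symm.hasSum_iff).mpr hsplit using 1
    funext k
    simp [g, Fin.consEquiv, Fin.prod_univ_succ, Fin.tail]

theorem hasSum_pi_prod_pow {n : ℕ} {r : Fin n → ℝ} (h0 : ∀ i, 0 ≤ r i) (h1 : ∀ i, r i < 1) :
    HasSum (fun k : Fin n → ℕ => ∏ i, r i ^ k i) (∏ i, (1 - r i)⁻¹) :=
  hasSum_pi_prod_of_nonneg (fun i k => pow_nonneg (h0 i) k)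
    fun i => hasSum_geometric_of_lt_one (h0 i) (h1 i)

theorem catalan_weight_le {ι : Type*} [Fintype ι] {A B : ℝ} (hA : 0 ≤ A) (hB : 0 ≤ B)
    (k : ι → ℕ) (L : ℕ) :
    A ^ (∑ i, k i) * B ^ L * (∏ i, (catalan (k i) : ℝ)) * (catalan L : ℝ) ≤
      (∏ i, (4 * A) ^ k i) * (4 * B) ^ L := by
  have hcat (j : ℕ) : (catalan j : ℝ) ≤ 4 ^ j := by exact_mod_cast catalan_le_four_pow j
  calc A ^ (∑ i, k i) * B ^ L * (∏ i, (catalan (k i) : ℝ)) * (catalan L : ℝ)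
      ≤ A ^ (∑ i, k i) * B ^ L * (∏ i, (4 : ℝ) ^ k i) * 4 ^ L := by
        gcongr with i
        · exact hcat _
        · exact hcat _
    _ = (∏ i, (4 * A) ^ k i) * (4 * B) ^ L := by
        simp only [← prod_pow_eq_pow_sum, mul_pow, prod_mul_distrib]
        ring

theorem abs_prod_pow_div_factorial_mul {ι : Type*} [Fintype ι] (t : ι → ℝ) (k : ι → ℕ) (x : ℝ) :
    |(∏ i, (-t i) ^ k i / ((k i).factorial : ℝ)) * x| =
      (∏ i, |t i| ^ k i) * (|x| / ∏ i, ((k i).factorial : ℝ)) := by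
  simp only [abs_mul, abs_prod, abs_div, abs_pow, abs_neg, Nat.abs_cast, prod_div_distrib]
  ring

/-- Under the Catalan-type bound
`|τ^{kk}(P)|/kk! ≤ A^{Σ k_i} B^{deg P} (∏ C_{k_i}) C_{deg P}`,
the multi-series `τ_t(P) = ∑_{kk} ∏ ((-t_i)^{k_i}/k_i!) τ^{kk}(P)` converges
absolutely whenever `|t_i| < 1/(4A)` for all `i`, and its sum satisfies
`|τ_t(P)| ≤ ∏ (1 - 4A|t_i|)⁻¹ (4B)^{deg P}`. -/
theorem generating_series_convergence
    (m n : ℕ) (A B : ℝ) (hA : 1 ≤ A) (hB : 1 ≤ B)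
    (τ : (Fin n → ℕ) → List (Fin m) → ℝ)
    (hbound : ∀ (kk : Fin n → ℕ) (P : List (Fin m)),
      |τ kk P| / ∏ i, ((kk i).factorial : ℝ) ≤
        A ^ (∑ i, kk i) * B ^ P.length *
          (∏ i, (catalan (kk i) : ℝ)) * (catalan P.length : ℝ))
    (t : Fin n → ℝ) (ht : ∀ i, |t i| < 1 / (4 * A)) (P : List (Fin m)) :
    Summable (fun kk : Fin n → ℕ =>
      |(∏ i, (-t i) ^ (kk i) / ((kk i).factorial : ℝ)) * τ kk P|) ∧
    |∑' kk : Fin n → ℕ, (∏ i, (-t i) ^ (kk i) / ((kk i).factorial : ℝ)) * τ kk P| ≤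
      (∏ i, (1 - 4 * A * |t i|)⁻¹) * (4 * B) ^ P.length := by
  have hA0 : 0 < A := one_pos.trans_le hA
  have hr1 (i : Fin n) : 4 * A * |t i| < 1 := by
    rw [mul_comm]; exact (lt_div_iff₀ (by positivity)).mp (ht i)
  have hmajorant := (hasSum_pi_prod_pow (fun i => by positivity) hr1).mul_right
    ((4 * B) ^ P.length)
  have hterm (kk : Fin n → ℕ) :
      |(∏ i, (-t i) ^ (kk i) / ((kk i).factorial : ℝ)) * τ kk P| ≤
        (∏ i, (4 * A * |t i|) ^ kk i) * (4 * B) ^ P.length := by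
    rw [abs_prod_pow_div_factorial_mul]
    calc (∏ i, |t i| ^ kk i) * (|τ kk P| / ∏ i, ((kk i).factorial : ℝ))
        ≤ (∏ i, |t i| ^ kk i) * ((∏ i, (4 * A) ^ kk i) * (4 * B) ^ P.length) := by
          gcongr
          exact (hbound kk P).trans (catalan_weight_le hA0.le (by linarith) kk _)
      _ = (∏ i, (4 * A * |t i|) ^ kk i) * (4 * B) ^ P.length := by
          simp only [mul_pow _ |t _|, prod_mul_distrib]; ring
  exact ⟨hmajorant.summable.of_nonneg_of_le (fun _ => abs_nonneg _) hterm,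
    tsum_of_norm_bounded (f := fun kk => (∏ i, (-t i) ^ kk i / ((kk i).factorial : ℝ)) * τ kk P)
      hmajorant hterm⟩
end

section
/- For every monomial P of even degree and every multi-index k̄, the number τ^{k̄}(P) defined by the Schwinger-Dyson recursion τ^{k̄}(X_i P) = Σ_{p̄ ≤ k̄} Π_j binom(k_j,p_j) Σ_{P = P₁X_iP₂} τ^{p̄}(P₁)τ^{k̄−p̄}(P₂) + Σ_j k_j τ^{k̄−1_j}(𝒟_i(q_j + q_j^*)P), τ^{k̄}(1) = 1_{k̄=0}, is a nonnegative integer. -/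
/-!
Every value `τ^{k̄}(P)` is obtained from the base values `0` and `1` by sums and products
with natural coefficients (binomial coefficients and the `k_j`), and the recursion only
calls `τ` at arguments that are smaller for the lexicographic order on `(|k̄|, deg P)`:
the splitting term keeps `|p̄|, |k̄ - p̄| ≤ |k̄|` and shortens the word, the cyclic-derivative
term lowers `|k̄|` by one (it vanishes when `k_j = 0`, where `k̄ - 1_j` would truncate).
So all values lie in the image of `ℕ`.
-/

open Finset

lemma sum_sub_unitIdx_lt {n : ℕ} {kk : Fin n → ℕ} {j : Fin n} (h : kk j ≠ 0) :
    ∑ j', (kk - unitIdx j) j' < ∑ j', kk j' :=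
  sum_lt_sum (fun _ _ => Nat.sub_le _ _)
    ⟨j, mem_univ j, by simpa [unitIdx] using Nat.pos_of_ne_zero h⟩

theorem schwinger_dyson_mem_natCast_range {m n : ℕ} (q : Fin n → List (Fin m))
    (τ : (Fin n → ℕ) → List (Fin m) → ℝ)
    (hbase : ∀ kk : Fin n → ℕ, τ kk [] = if kk = 0 then 1 else 0)
    (hrec : ∀ (kk : Fin n → ℕ) (i : Fin m) (P : List (Fin m)),
      τ kk (i :: P) =
        (∑ pp ∈ Finset.Iic kk,
          (∏ j, ((kk j).choose (pp j) : ℝ)) *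
            ∑ k ∈ occurrences i P,
              τ pp (P.take (k : ℕ)) * τ (kk - pp) (P.drop ((k : ℕ) + 1)))
        + ∑ j : Fin n,
            (kk j : ℝ) *
              ((∑ k ∈ occurrences i (q j), τ (kk - unitIdx j) (cycTerm (q j) (k : ℕ) P))
               + ∑ k ∈ occurrences i (q j).reverse,
                   τ (kk - unitIdx j) (cycTerm (q j).reverse (k : ℕ) P)))
    (kk : Fin n → ℕ) (P : List (Fin m)) :
    τ kk P ∈ (Nat.castRingHom ℝ).rangeS := by
  match P with
  | [] =>
    rw [hbase]
    split
    exacts [one_mem _, zero_mem _]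
  | i :: P =>
    rw [hrec]
    refine add_mem (sum_mem fun pp hpp => mul_mem (prod_mem fun j _ => ⟨_, rfl⟩)
      (sum_mem fun k _ => mul_mem ?_ ?_)) (sum_mem fun j _ => ?_)
    · exact schwinger_dyson_mem_natCast_range q τ hbase hrec pp _
    · exact schwinger_dyson_mem_natCast_range q τ hbase hrec (kk - pp) _
    · rcases eq_or_ne (kk j) 0 with h0 | h0
      · simp [h0]
      · exact mul_mem ⟨kk j, rfl⟩ (add_mem
          (sum_mem fun k _ => schwinger_dyson_mem_natCast_range q τ hbase hrec (kk - unitIdx j) _)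
          (sum_mem fun k _ => schwinger_dyson_mem_natCast_range q τ hbase hrec (kk - unitIdx j) _))
termination_by (∑ j, kk j, P.length)
decreasing_by
  · exact Prod.Lex.right' _ (sum_le_sum fun j _ => mem_Iic.mp hpp j)
      (by simp only [List.length_take, List.length_cons]; omega)
  · exact Prod.Lex.right' _ (sum_le_sum fun j _ => Nat.sub_le _ _)
      (by simp only [List.length_drop, List.length_cons]; omega)
  all_goals exact Prod.Lex.left _ _ (sum_sub_unitIdx_lt h0)

/-- The numbers `τ^{k̄}(P)` defined by the Schwinger-Dyson recursion
(`τ^{k̄}(1) = 1_{k̄=0}`, and the recursion on `τ^{k̄}(X_i P)` involving binomial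
coefficients, decompositions of `P`, and the cyclic derivatives `𝒟_i(q_j + q_j^*)`)
are nonnegative integers for every monomial `P` of even degree. -/
theorem schwinger_dyson_recursion_nat_valued
    (m n : ℕ) (q : Fin n → List (Fin m))
    (τ : (Fin n → ℕ) → List (Fin m) → ℝ)
    (hbase : ∀ kk : Fin n → ℕ, τ kk [] = if kk = 0 then 1 else 0)
    (hrec : ∀ (kk : Fin n → ℕ) (i : Fin m) (P : List (Fin m)),
      τ kk (i :: P) =
        (∑ pp ∈ Finset.Iic kk,
          (∏ j, ((kk j).choose (pp j) : ℝ)) *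
            ∑ k ∈ occurrences i P,
              τ pp (P.take (k : ℕ)) * τ (kk - pp) (P.drop ((k : ℕ) + 1)))
        + ∑ j : Fin n,
            (kk j : ℝ) *
              ((∑ k ∈ occurrences i (q j), τ (kk - unitIdx j) (cycTerm (q j) (k : ℕ) P))
               + ∑ k ∈ occurrences i (q j).reverse,
                   τ (kk - unitIdx j) (cycTerm (q j).reverse (k : ℕ) P))) :
    ∀ (kk : Fin n → ℕ) (P : List (Fin m)), Even P.length →
      ∃ N : ℕ, τ kk P = (N : ℝ) := by
  intro kk P _
  obtain ⟨N, hN⟩ := schwinger_dyson_mem_natCast_range q τ hbase hrec kk P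
  exact ⟨N, hN.symm⟩
end

section
/- Let τ be a linear functional on ℂ⟨A,B⟩ (two non-commuting variables) satisfying the Ising Schwinger-Dyson equations τ((W₁'(A) − B)P) = τ⊗τ(D_A P) and τ((W₂'(B) − A)P) = τ⊗τ(D_B P) for all polynomials P, with τ(1) = 1, where W₁, W₂ are fixed polynomials. Then τ is uniquely determined by its restriction to polynomials in A alone: for every monomial P, τ(P) is a universal polynomial expression in the values {τ(Q(A)) : Q monomial in A}, obtained by induction on the degree of P in B via τ(BP) = −τ⊗τ(D_A P) + τ(W₁'(A)P). -/
/-- `τ` is a tracial solution of the Ising Schwinger-Dyson equations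
`τ((W₁'(A) − B)P) = τ⊗τ(D_A P)` and `τ((W₂'(B) − A)P) = τ⊗τ(D_B P)`,
where words in `Fin 2` encode monomials in `A` (letter `0`) and `B` (letter `1`). -/
def IsIsingSD (W₁ W₂ : Polynomial ℝ) (τ : List (Fin 2) → ℝ) : Prop :=
  τ [] = 1 ∧
  (∀ P Q : List (Fin 2), τ (P ++ Q) = τ (Q ++ P)) ∧
  (∀ P : List (Fin 2),
    (∑ k ∈ Finset.range ((Polynomial.derivative W₁).natDegree + 1),
        (Polynomial.derivative W₁).coeff k * τ (List.replicate k (0 : Fin 2) ++ P))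
      - τ ((1 : Fin 2) :: P)
    = ∑ k ∈ occurrences (0 : Fin 2) P,
        τ (P.take (k : ℕ)) * τ (P.drop ((k : ℕ) + 1))) ∧
  (∀ P : List (Fin 2),
    (∑ k ∈ Finset.range ((Polynomial.derivative W₂).natDegree + 1),
        (Polynomial.derivative W₂).coeff k * τ (List.replicate k (1 : Fin 2) ++ P))
      - τ ((0 : Fin 2) :: P)
    = ∑ k ∈ occurrences (1 : Fin 2) P,
        τ (P.take (k : ℕ)) * τ (P.drop ((k : ℕ) + 1)))

theorem List.eq_replicate_zero_of_count_one_eq_zero {P : List (Fin 2)} (hP : P.count 1 = 0) :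
    P = List.replicate P.length 0 := by
  refine List.eq_replicate_iff.2 ⟨rfl, fun b hb => ?_⟩
  have hb1 : b ≠ 1 := fun h => List.count_eq_zero.1 hP (h ▸ hb)
  omega

namespace IsIsingSD

variable {W₁ W₂ : Polynomial ℝ} {τ : List (Fin 2) → ℝ}

theorem apply_append_B_cons (h : IsIsingSD W₁ W₂ τ) (X Y : List (Fin 2)) :
    τ (X ++ 1 :: Y) = τ (1 :: (Y ++ X)) := by
  rw [h.2.1]
  simp

theorem apply_B_cons (h : IsIsingSD W₁ W₂ τ) (P : List (Fin 2)) :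
    τ (1 :: P) =
      (∑ k ∈ Finset.range ((Polynomial.derivative W₁).natDegree + 1),
          (Polynomial.derivative W₁).coeff k * τ (List.replicate k 0 ++ P))
        - ∑ k ∈ occurrences 0 P, τ (P.take k) * τ (P.drop (k + 1)) := by
  linarith [h.2.2.1 P]

theorem apply_B_cons_eq_of_count_le {τ₁ τ₂ : List (Fin 2) → ℝ} (h₁ : IsIsingSD W₁ W₂ τ₁)
    (h₂ : IsIsingSD W₁ W₂ τ₂) {P : List (Fin 2)}
    (hP : ∀ R : List (Fin 2), R.count 1 ≤ P.count 1 → τ₁ R = τ₂ R) :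
    τ₁ (1 :: P) = τ₂ (1 :: P) := by
  rw [h₁.apply_B_cons, h₂.apply_B_cons]
  have hA : ∀ k, τ₁ (List.replicate k 0 ++ P) = τ₂ (List.replicate k 0 ++ P) := fun k =>
    hP _ (by simp [List.count_replicate])
  have htake : ∀ k : ℕ, τ₁ (P.take k) = τ₂ (P.take k) := fun k =>
    hP _ ((List.take_sublist k P).count_le 1)
  have hdrop : ∀ k : ℕ, τ₁ (P.drop k) = τ₂ (P.drop k) := fun k =>
    hP _ ((List.drop_sublist k P).count_le 1)
  simp only [hA, htake, hdrop]

end IsIsingSD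

/-- A tracial solution of the Ising Schwinger-Dyson equations is uniquely determined
by its restriction to polynomials in `A` alone: two solutions agreeing on all words
`A^k` agree on every monomial. -/
theorem ising_SD_determined_by_A_marginal
    (W₁ W₂ : Polynomial ℝ) (τ₁ τ₂ : List (Fin 2) → ℝ)
    (h₁ : IsIsingSD W₁ W₂ τ₁) (h₂ : IsIsingSD W₁ W₂ τ₂)
    (hagree : ∀ k : ℕ, τ₁ (List.replicate k (0 : Fin 2)) = τ₂ (List.replicate k (0 : Fin 2))) :
    ∀ P : List (Fin 2), τ₁ P = τ₂ P := by
  intro P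
  induction hn : P.count 1 using Nat.strong_induction_on generalizing P with
  | _ n ih =>
  rcases n with _ | n
  · rw [List.eq_replicate_zero_of_count_one_eq_zero hn, hagree]
  · obtain ⟨X, Y, rfl⟩ := List.append_of_mem (List.count_pos_iff.1 (by omega : 0 < P.count 1))
    rw [h₁.apply_append_B_cons, h₂.apply_append_B_cons]
    refine h₁.apply_B_cons_eq_of_count_le h₂ fun R hR => ih _ ?_ R rfl
    simp only [List.count_append, List.count_cons_self] at hn hR
    omega
end

section
/- Let h(z) = (1−3z)² / (1 − c²(1−3z)²(1−3z²)) and set x = y = −z/(3c² h(z/3)), P = −c² h(z/3), u = c. Then P, x, y, u satisfy the algebraic equation P = 1 + 3xyP³ + P(1+3xP)(1+3yP) / (u²(1−9xyP²)²), wherever both sides are defined. -/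
/-! On the diagonal `x = y` the substitution makes `x P = z/3` independent of `c`, so the
Bousquet-Mélou–Schaeffer equation collapses to an equation in `P` alone with coefficients in
`t = z/3`; solving it for `P` gives exactly `-c² h(t)`. -/

section BousquetMelouSchaeffer

variable {K : Type*} [Field K]

theorem bms_diagonal_rhs_eq_of_mul_eq {x P t u : K} (hxP : x * P = t) :
    1 + 3 * x * x * P ^ 3 + P * (1 + 3 * x * P) * (1 + 3 * x * P) /
        (u ^ 2 * (1 - 9 * x * x * P ^ 2) ^ 2) =
      1 + 3 * t ^ 2 * P + P * (1 + 3 * t) ^ 2 / (u ^ 2 * (1 - 9 * t ^ 2) ^ 2) := by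
  rw [← hxP]
  ring

theorem neg_div_mul_neg_mul_eq {z c h : K} (hc : c ≠ 0) (hh : h ≠ 0) :
    -z / (3 * c ^ 2 * h) * (-c ^ 2 * h) = z / 3 := by
  field_simp

theorem bms_diagonal_eq_of_eq_neg_mul {t c P : K} (hc : c ≠ 0)
    (hden : 1 - c ^ 2 * (1 - 3 * t) ^ 2 * (1 - 3 * t ^ 2) ≠ 0) (ht : 1 - 9 * t ^ 2 ≠ 0)
    (hP : P = -c ^ 2 * ((1 - 3 * t) ^ 2 / (1 - c ^ 2 * (1 - 3 * t) ^ 2 * (1 - 3 * t ^ 2)))) :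
    P = 1 + 3 * t ^ 2 * P + P * (1 + 3 * t) ^ 2 / (c ^ 2 * (1 - 9 * t ^ 2) ^ 2) := by
  subst hP
  have hfactor : 1 - 9 * t ^ 2 = (1 - 3 * t) * (1 + 3 * t) := by ring
  rw [hfactor] at ht ⊢
  have hminus : 1 - 3 * t ≠ 0 := left_ne_zero_of_mul ht
  have hplus : 1 + 3 * t ≠ 0 := right_ne_zero_of_mul ht
  field_simp
  ring

end BousquetMelouSchaeffer

/-- The change of variables identifying the Boulatov–Kazakov solution of the Ising
matrix model with the Bousquet-Mélou–Schaeffer algebraic equation: with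
`h(z) = (1-3z)²/(1 - c²(1-3z)²(1-3z²))`, `x = y = -z/(3c² h(z/3))`,
`P = -c² h(z/3)`, `u = c`, one has
`P = 1 + 3xyP³ + P(1+3xP)(1+3yP)/(u²(1-9xyP²)²)` wherever both sides are defined. -/
theorem ising_algebraic_equation_change_of_variables
    (z c : ℝ) (hc : c ≠ 0)
    (hden : 1 - c ^ 2 * (1 - 3 * (z / 3)) ^ 2 * (1 - 3 * (z / 3) ^ 2) ≠ 0)
    (hH : (1 - 3 * (z / 3)) ^ 2 /
        (1 - c ^ 2 * (1 - 3 * (z / 3)) ^ 2 * (1 - 3 * (z / 3) ^ 2)) ≠ 0) :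
    let h : ℝ := (1 - 3 * (z / 3)) ^ 2 /
      (1 - c ^ 2 * (1 - 3 * (z / 3)) ^ 2 * (1 - 3 * (z / 3) ^ 2))
    let P : ℝ := -c ^ 2 * h
    let x : ℝ := -z / (3 * c ^ 2 * h)
    let y : ℝ := x
    let u : ℝ := c
    1 - 9 * x * y * P ^ 2 ≠ 0 →
      P = 1 + 3 * x * y * P ^ 3 +
        P * (1 + 3 * x * P) * (1 + 3 * y * P) / (u ^ 2 * (1 - 9 * x * y * P ^ 2) ^ 2) := by
  intro h P x y u hne
  have hxP : x * P = z / 3 := neg_div_mul_neg_mul_eq hc hH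
  have hdiag : 1 - 9 * x * x * P ^ 2 = 1 - 9 * (z / 3) ^ 2 := by
    rw [← hxP]
    ring
  rw [bms_diagonal_rhs_eq_of_mul_eq hxP]
  exact bms_diagonal_eq_of_eq_neg_mul hc hden (hdiag ▸ hne) rfl
end
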